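/- arXiv:2401.11422 — 8 statements merged into one kernel-verified Lean document; each statement's English description precedes it below -/
import Mathlib

section
/- Let U ⊂ ℝ^p be convex open and q : U → ℝ^p be differentiable with symmetric positive definite derivative everywhere. Then q is strictly cyclically monotone: for any points u¹,…,u^k ∈ U with u^{k+1} := u¹, one has ∑_{i=1}^k (u^{i+1} - u^i)ᵀ q(u^{i}) ≤ 0 (equivalently ∑ (u^{i+1})ᵀ(q(u^{i+1}) - q(u^i)) ≥ 0), with strict inequality unless u¹ = ⋯ = u^k. -/
/-!
Symmetry of `Dq` makes the 1-form `⟪q x, dx⟫` closed. Pulling it back to the unit square along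
`(s, t) ↦ a + s • (b + t • (c - b) - a)` and applying Green's theorem (which needs only
differentiability, not continuity of `Dq`) shows that integrals of this form over segments are
additive along triangles in `U`; hence the segment integrals around the cycle telescope to `0`.
Positive definiteness makes `t ↦ ⟪q (a + t • (b - a)), b - a⟫` strictly increasing, so each term
`⟪q a, b - a⟫` of the cyclic sum is at most the segment integral from `a` to `b`, strictly so
when `a ≠ b`.
-/

open scoped RealInnerProductSpace
open Set

variable {E : Type*} [NormedAddCommGroup E] [InnerProductSpace ℝ E]

noncomputable def segmentIntegral (q : E → E) (a b : E) : ℝ :=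
  ∫ t in (0 : ℝ)..1, ⟪q (a + t • (b - a)), b - a⟫

@[simp]
theorem segmentIntegral_self (q : E → E) (a : E) : segmentIntegral q a a = 0 := by
  simp [segmentIntegral]

section Segment

variable {U : Set E} {q : E → E} {a b : E}

theorem hasDerivAt_inner_segment {t : ℝ} (hq : DifferentiableAt ℝ q (a + t • (b - a))) :
    HasDerivAt (fun s : ℝ => ⟪q (a + s • (b - a)), b - a⟫)
      ⟪fderiv ℝ q (a + t • (b - a)) (b - a), b - a⟫ t := by
  have hseg : HasDerivAt (fun s : ℝ => a + s • (b - a)) (b - a) t := by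
    simpa using ((hasDerivAt_id t).smul_const (b - a)).const_add a
  simpa using (hq.hasFDerivAt.comp_hasDerivAt t hseg).inner ℝ (hasDerivAt_const t (b - a))

theorem continuousOn_inner_segment (hU : Convex ℝ U)
    (hdiff : ∀ u ∈ U, DifferentiableAt ℝ q u) (ha : a ∈ U) (hb : b ∈ U) :
    ContinuousOn (fun t : ℝ => ⟪q (a + t • (b - a)), b - a⟫) (Icc 0 1) := fun _ ht =>
  (hasDerivAt_inner_segment (hdiff _ (hU.add_smul_sub_mem ha hb ht))).continuousAt
    |>.continuousWithinAt

theorem strictMonoOn_inner_segment (hU : Convex ℝ U)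
    (hdiff : ∀ u ∈ U, DifferentiableAt ℝ q u)
    (hpos : ∀ u ∈ U, ∀ v : E, v ≠ 0 → 0 < ⟪fderiv ℝ q u v, v⟫)
    (ha : a ∈ U) (hb : b ∈ U) (hab : a ≠ b) :
    StrictMonoOn (fun t : ℝ => ⟪q (a + t • (b - a)), b - a⟫) (Icc 0 1) := by
  refine strictMonoOn_of_deriv_pos (convex_Icc 0 1)
    (continuousOn_inner_segment hU hdiff ha hb) fun t ht => ?_
  rw [interior_Icc] at ht
  have hseg := hU.add_smul_sub_mem ha hb (Ioo_subset_Icc_self ht)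
  rw [(hasDerivAt_inner_segment (hdiff _ hseg)).deriv]
  exact hpos _ hseg _ (sub_ne_zero.2 hab.symm)

theorem inner_lt_segmentIntegral (hU : Convex ℝ U)
    (hdiff : ∀ u ∈ U, DifferentiableAt ℝ q u)
    (hpos : ∀ u ∈ U, ∀ v : E, v ≠ 0 → 0 < ⟪fderiv ℝ q u v, v⟫)
    (ha : a ∈ U) (hb : b ∈ U) (hab : a ≠ b) :
    ⟪q a, b - a⟫ < segmentIntegral q a b := by
  have hmono := strictMonoOn_inner_segment hU hdiff hpos ha hb hab
  have h0 : (0 : ℝ) ∈ Icc (0 : ℝ) 1 := left_mem_Icc.2 zero_le_one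
  have h1 : (1 : ℝ) ∈ Icc (0 : ℝ) 1 := right_mem_Icc.2 zero_le_one
  have hlt := intervalIntegral.integral_lt_integral_of_continuousOn_of_le_of_exists_lt
    (f := fun _ => ⟪q a, b - a⟫) one_pos continuousOn_const
    (continuousOn_inner_segment hU hdiff ha hb)
    (fun t ht => by simpa using (hmono h0 (Ioc_subset_Icc_self ht) ht.1).le)
    ⟨1, h1, by simpa using hmono h0 h1 one_pos⟩
  simpa [segmentIntegral] using hlt

theorem inner_le_segmentIntegral (hU : Convex ℝ U)
    (hdiff : ∀ u ∈ U, DifferentiableAt ℝ q u)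
    (hpos : ∀ u ∈ U, ∀ v : E, v ≠ 0 → 0 < ⟪fderiv ℝ q u v, v⟫)
    (ha : a ∈ U) (hb : b ∈ U) :
    ⟪q a, b - a⟫ ≤ segmentIntegral q a b := by
  rcases eq_or_ne a b with rfl | hab
  · simp
  · exact (inner_lt_segmentIntegral hU hdiff hpos ha hb hab).le

end Segment

section Triangle

variable {U : Set E} {q : E → E} {a b c : E}

def trianglePatch (a b c : E) (z : ℝ × ℝ) : E :=
  a + z.1 • (b - a) + (z.1 * z.2) • (c - b)

theorem trianglePatch_mem (hU : Convex ℝ U) (ha : a ∈ U) (hb : b ∈ U) (hc : c ∈ U)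
    {z : ℝ × ℝ} (hz : z ∈ Icc (0, 0) (1, 1)) : trianglePatch a b c z ∈ U := by
  obtain ⟨⟨hs0, ht0⟩, hs1, ht1⟩ := hz
  have hbc : b + z.2 • (c - b) ∈ U := hU.add_smul_sub_mem hb hc ⟨ht0, ht1⟩
  convert hU.add_smul_sub_mem ha hbc ⟨hs0, hs1⟩ using 1
  simp only [trianglePatch]
  module

theorem hasFDerivAt_trianglePatch (a b c : E) (z : ℝ × ℝ) :
    HasFDerivAt (trianglePatch a b c)
      ((ContinuousLinearMap.fst ℝ ℝ ℝ).smulRight (b - a) +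
        (z.1 • ContinuousLinearMap.snd ℝ ℝ ℝ + z.2 • ContinuousLinearMap.fst ℝ ℝ ℝ).smulRight
          (c - b)) z :=
  ((hasFDerivAt_fst.smul_const (b - a)).const_add a).add
    ((hasFDerivAt_fst.mul hasFDerivAt_snd).smul_const (c - b))

/-- The two components of the pullback of the 1-form `⟪q x, dx⟫` along `trianglePatch a b c`. -/
def trianglePullbackFst (q : E → E) (a b c : E) (z : ℝ × ℝ) : ℝ :=
  ⟪q (trianglePatch a b c z), (b - a) + z.2 • (c - b)⟫

def trianglePullbackSnd (q : E → E) (a b c : E) (z : ℝ × ℝ) : ℝ :=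
  ⟪q (trianglePatch a b c z), z.1 • (c - b)⟫

theorem differentiableAt_trianglePullbackFst {z : ℝ × ℝ}
    (hq : DifferentiableAt ℝ q (trianglePatch a b c z)) :
    DifferentiableAt ℝ (trianglePullbackFst q a b c) z :=
  (hq.comp z (hasFDerivAt_trianglePatch a b c z).differentiableAt).inner ℝ (by fun_prop)

theorem differentiableAt_trianglePullbackSnd {z : ℝ × ℝ}
    (hq : DifferentiableAt ℝ q (trianglePatch a b c z)) :
    DifferentiableAt ℝ (trianglePullbackSnd q a b c) z :=
  (hq.comp z (hasFDerivAt_trianglePatch a b c z).differentiableAt).inner ℝ (by fun_prop)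

theorem fderiv_trianglePullbackSnd_eq {z : ℝ × ℝ}
    (hq : DifferentiableAt ℝ q (trianglePatch a b c z))
    (hsym : ∀ v w : E, ⟪fderiv ℝ q (trianglePatch a b c z) v, w⟫ =
      ⟪v, fderiv ℝ q (trianglePatch a b c z) w⟫) :
    fderiv ℝ (trianglePullbackSnd q a b c) z (1, 0) =
      fderiv ℝ (trianglePullbackFst q a b c) z (0, 1) := by
  have hX := hasFDerivAt_trianglePatch a b c z
  have hqX : HasFDerivAt (fun z => q (trianglePatch a b c z)) _ z := hq.hasFDerivAt.comp z hX
  have hs : HasFDerivAt (fun z : ℝ × ℝ => z.1 • (c - b))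
      ((ContinuousLinearMap.fst ℝ ℝ ℝ).smulRight (c - b)) z := hasFDerivAt_fst.smul_const _
  have ht : HasFDerivAt (fun z : ℝ × ℝ => (b - a) + z.2 • (c - b))
      ((ContinuousLinearMap.snd ℝ ℝ ℝ).smulRight (c - b)) z :=
    (hasFDerivAt_snd.smul_const _).const_add _
  unfold trianglePullbackFst trianglePullbackSnd
  rw [fderiv_inner_apply ℝ hqX.differentiableAt hs.differentiableAt,
    fderiv_inner_apply ℝ hqX.differentiableAt ht.differentiableAt, hqX.fderiv, hs.fderiv,
    ht.fderiv]
  simp only [ContinuousLinearMap.comp_apply, add_apply,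
    smul_apply, ContinuousLinearMap.smulRight_apply,
    ContinuousLinearMap.coe_fst', ContinuousLinearMap.coe_snd', smul_eq_mul, mul_zero, mul_one,
    zero_add, add_zero, one_smul, zero_smul]
  rw [hsym, real_inner_comm (fderiv ℝ q _ _)]

@[simp]
theorem trianglePullbackFst_apply_zero (q : E → E) (a b c : E) (s : ℝ) :
    trianglePullbackFst q a b c (s, 0) = ⟪q (a + s • (b - a)), b - a⟫ := by
  simp [trianglePullbackFst, trianglePatch]

@[simp]
theorem trianglePullbackFst_apply_one (q : E → E) (a b c : E) (s : ℝ) :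
    trianglePullbackFst q a b c (s, 1) = ⟪q (a + s • (c - a)), c - a⟫ := by
  have hX : trianglePatch a b c (s, 1) = a + s • (c - a) := by
    simp only [trianglePatch, mul_one]
    module
  rw [trianglePullbackFst, hX, one_smul, sub_add_sub_cancel']

@[simp]
theorem trianglePullbackSnd_apply_zero (q : E → E) (a b c : E) (t : ℝ) :
    trianglePullbackSnd q a b c (0, t) = 0 := by
  simp [trianglePullbackSnd]

@[simp]
theorem trianglePullbackSnd_apply_one (q : E → E) (a b c : E) (t : ℝ) :
    trianglePullbackSnd q a b c (1, t) = ⟪q (b + t • (c - b)), c - b⟫ := by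
  have hX : trianglePatch a b c (1, t) = b + t • (c - b) := by
    simp only [trianglePatch, one_mul, one_smul]
    module
  rw [trianglePullbackSnd, hX, one_smul]

/-- Green's theorem for the closed pulled-back form on the unit square; the edge `s = 0` of the
square collapses to the vertex `a`. -/
theorem segmentIntegral_add (hU : Convex ℝ U) (hdiff : ∀ u ∈ U, DifferentiableAt ℝ q u)
    (hsym : ∀ u ∈ U, ∀ v w : E, ⟪fderiv ℝ q u v, w⟫ = ⟪v, fderiv ℝ q u w⟫)
    (ha : a ∈ U) (hb : b ∈ U) (hc : c ∈ U) :
    segmentIntegral q a b + segmentIntegral q b c = segmentIntegral q a c := by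
  set F := trianglePullbackFst q a b c
  set G := trianglePullbackSnd q a b c
  have hmem : ∀ z ∈ Icc ((0, 0) : ℝ × ℝ) (1, 1), trianglePatch a b c z ∈ U := fun z hz =>
    trianglePatch_mem hU ha hb hc hz
  have hF : ∀ z ∈ Icc ((0, 0) : ℝ × ℝ) (1, 1), DifferentiableAt ℝ F z := fun z hz =>
    differentiableAt_trianglePullbackFst (hdiff _ (hmem z hz))
  have hG : ∀ z ∈ Icc ((0, 0) : ℝ × ℝ) (1, 1), DifferentiableAt ℝ G z := fun z hz =>
    differentiableAt_trianglePullbackSnd (hdiff _ (hmem z hz))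
  have hclosed : EqOn (fun z => fderiv ℝ G z (1, 0) + (-fderiv ℝ F z) (0, 1)) 0
      (Icc (0, 0) (1, 1)) := fun z hz => by
    simp [G, F, fderiv_trianglePullbackSnd_eq (hdiff _ (hmem z hz)) (hsym _ (hmem z hz))]
  have hinterior : Ioo (0 : ℝ) 1 ×ˢ Ioo (0 : ℝ) 1 \ ∅ ⊆ Icc ((0, 0) : ℝ × ℝ) (1, 1) :=
    fun z ⟨⟨hs, ht⟩, _⟩ => ⟨⟨hs.1.le, ht.1.le⟩, hs.2.le, ht.2.le⟩
  have hgreen := MeasureTheory.integral_divergence_prod_Icc_of_hasFDerivAt_off_countable_of_le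
    G (fun z => -F z) (fderiv ℝ G) (fun z => -fderiv ℝ F z) (0, 0) (1, 1) (by norm_num) ∅
    countable_empty (fun z hz => (hG z hz).continuousAt.continuousWithinAt)
    (fun z hz => (hF z hz).continuousAt.continuousWithinAt.neg)
    (fun z hz => (hG z (hinterior hz)).hasFDerivAt)
    (fun z hz => (hF z (hinterior hz)).hasFDerivAt.neg)
    (MeasureTheory.integrableOn_zero.congr_fun hclosed.symm measurableSet_Icc)
  rw [MeasureTheory.setIntegral_congr_fun measurableSet_Icc hclosed] at hgreen
  simp only [Pi.zero_apply, MeasureTheory.integral_zero, intervalIntegral.integral_zero,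
    intervalIntegral.integral_neg, trianglePullbackFst_apply_zero, trianglePullbackFst_apply_one,
    trianglePullbackSnd_apply_zero, trianglePullbackSnd_apply_one, sub_neg_eq_add, sub_zero, F, G]
    at hgreen
  rw [segmentIntegral, segmentIntegral, segmentIntegral]
  linarith

end Triangle

theorem exists_ne_succ_of_exists_ne {α : Type*} {u : ℕ → α} {k : ℕ}
    (h : ∃ i ≤ k, u i ≠ u 0) : ∃ j < k, u j ≠ u (j + 1) := by
  contrapose! h
  intro i hi
  induction i with
  | zero => rfl
  | succ i ih => rw [← h i hi, ih (Nat.le_of_succ_le hi)]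

theorem sum_segmentIntegral_cycle_eq_zero {U : Set E} {q : E → E} (hU : Convex ℝ U)
    (hdiff : ∀ u ∈ U, DifferentiableAt ℝ q u)
    (hsym : ∀ u ∈ U, ∀ v w : E, ⟪fderiv ℝ q u v, w⟫ = ⟪v, fderiv ℝ q u w⟫)
    {k : ℕ} {u : ℕ → E} (hu : ∀ i ≤ k, u i ∈ U) (hcyc : u k = u 0) :
    ∑ i ∈ Finset.range k, segmentIntegral q (u i) (u (i + 1)) = 0 := by
  have htel : ∀ i ∈ Finset.range k, segmentIntegral q (u i) (u (i + 1)) =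
      segmentIntegral q (u 0) (u (i + 1)) - segmentIntegral q (u 0) (u i) := fun i hi => by
    have hi := Finset.mem_range.1 hi
    rw [← segmentIntegral_add hU hdiff hsym (hu 0 k.zero_le) (hu i hi.le) (hu (i + 1) hi)]
    ring
  rw [Finset.sum_congr rfl htel, Finset.sum_range_sub (fun i => segmentIntegral q (u 0) (u i)),
    hcyc, sub_self]

theorem stmt1_general {p : ℕ} (U : Set (EuclideanSpace ℝ (Fin p)))
    (hUconv : Convex ℝ U)
    (q : EuclideanSpace ℝ (Fin p) → EuclideanSpace ℝ (Fin p))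
    (hdiff : ∀ u ∈ U, DifferentiableAt ℝ q u)
    (hsym : ∀ u ∈ U, ∀ v w : EuclideanSpace ℝ (Fin p),
      ⟪fderiv ℝ q u v, w⟫ = ⟪v, fderiv ℝ q u w⟫)
    (hpos : ∀ u ∈ U, ∀ v : EuclideanSpace ℝ (Fin p), v ≠ 0 →
      0 < ⟪fderiv ℝ q u v, v⟫)
    (k : ℕ) (u : ℕ → EuclideanSpace ℝ (Fin p))
    (hu : ∀ i ≤ k, u i ∈ U) (hcyc : u k = u 0) :
    (∑ i ∈ Finset.range k, ⟪u (i + 1) - u i, q (u i)⟫) ≤ 0 ∧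
    ((∃ i < k, u i ≠ u 0) →
      (∑ i ∈ Finset.range k, ⟪u (i + 1) - u i, q (u i)⟫) < 0) := by
  have hsum := sum_segmentIntegral_cycle_eq_zero hUconv hdiff hsym hu hcyc
  have hle : ∀ i ∈ Finset.range k,
      ⟪u (i + 1) - u i, q (u i)⟫ ≤ segmentIntegral q (u i) (u (i + 1)) := fun i hi => by
    have hi := Finset.mem_range.1 hi
    rw [real_inner_comm]
    exact inner_le_segmentIntegral hUconv hdiff hpos (hu i hi.le) (hu (i + 1) hi)
  refine ⟨(Finset.sum_le_sum hle).trans_eq hsum, fun ⟨i, hik, hi⟩ => ?_⟩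
  obtain ⟨j, hjk, hj⟩ := exists_ne_succ_of_exists_ne ⟨i, hik.le, hi⟩
  have hlt : ⟪u (j + 1) - u j, q (u j)⟫ < segmentIntegral q (u j) (u (j + 1)) := by
    rw [real_inner_comm]
    exact inner_lt_segmentIntegral hUconv hdiff hpos (hu j hjk.le) (hu (j + 1) hjk) hj
  exact (Finset.sum_lt_sum hle ⟨j, Finset.mem_range.2 hjk, hlt⟩).trans_eq hsum

theorem stmt1 {p : ℕ} (U : Set (EuclideanSpace ℝ (Fin p)))
    (hUconv : Convex ℝ U) (hUopen : IsOpen U)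
    (q : EuclideanSpace ℝ (Fin p) → EuclideanSpace ℝ (Fin p))
    (hdiff : ∀ u ∈ U, DifferentiableAt ℝ q u)
    (hsym : ∀ u ∈ U, ∀ v w : EuclideanSpace ℝ (Fin p),
      ⟪fderiv ℝ q u v, w⟫ = ⟪v, fderiv ℝ q u w⟫)
    (hpos : ∀ u ∈ U, ∀ v : EuclideanSpace ℝ (Fin p), v ≠ 0 →
      0 < ⟪fderiv ℝ q u v, v⟫)
    (k : ℕ) (hk : 0 < k) (u : ℕ → EuclideanSpace ℝ (Fin p))
    (hu : ∀ i ≤ k, u i ∈ U) (hcyc : u k = u 0) :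
    (∑ i ∈ Finset.range k, ⟪u (i + 1) - u i, q (u i)⟫) ≤ 0 ∧
    ((∃ i < k, u i ≠ u 0) →
      (∑ i ∈ Finset.range k, ⟪u (i + 1) - u i, q (u i)⟫) < 0) :=
  stmt1_general U hUconv q hdiff hsym hpos k u hu hcyc
end

section
/- Let U ⊂ ℝ^p be convex open and q : U → ℝ^p be differentiable with symmetric positive definite derivative on U. Then q is injective on U. -/
open scoped RealInnerProductSpace

/-!
Along the segment `x + t • (y - x)`, the derivative of `t ↦ ⟪q (x + t • (y - x)), y - x⟫` is
`⟪Dq (y - x), y - x⟫ > 0`, so this function is strictly increasing on `[0, 1]`; comparing its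
endpoint values gives `⟪q y - q x, y - x⟫ > 0`, i.e. `q` is a strictly monotone operator on `U`.
-/

section

variable {E : Type*} [NormedAddCommGroup E] [InnerProductSpace ℝ E] {U : Set E} {q : E → E}

theorem Convex.inner_sub_sub_pos_of_inner_fderiv_pos (hU : Convex ℝ U)
    (hdiff : ∀ u ∈ U, DifferentiableAt ℝ q u)
    (hpos : ∀ u ∈ U, ∀ v : E, v ≠ 0 → 0 < ⟪fderiv ℝ q u v, v⟫)
    {x y : E} (hx : x ∈ U) (hy : y ∈ U) (hxy : x ≠ y) :
    0 < ⟪q y - q x, y - x⟫ := by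
  set d := y - x
  have hd : d ≠ 0 := sub_ne_zero.mpr hxy.symm
  have hmem : ∀ t ∈ Set.Icc (0 : ℝ) 1, x + t • d ∈ U := fun t ht => hU.add_smul_sub_mem hx hy ht
  have hderiv : ∀ t ∈ Set.Icc (0 : ℝ) 1,
      HasDerivAt (fun s : ℝ => ⟪q (x + s • d), d⟫) ⟪fderiv ℝ q (x + t • d) d, d⟫ t := by
    intro t ht
    have hline : HasDerivAt (fun s : ℝ => x + s • d) d t := by
      simpa using ((hasDerivAt_id t).smul_const d).const_add x
    exact ((hdiff _ (hmem t ht)).hasFDerivAt.comp_hasDerivAt t hline).inner ℝ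
      (hasDerivAt_const t d) |>.congr_deriv (by simp)
  have hmono : StrictMonoOn (fun s : ℝ => ⟪q (x + s • d), d⟫) (Set.Icc 0 1) := by
    refine strictMonoOn_of_deriv_pos (convex_Icc 0 1)
      (fun t ht => (hderiv t ht).continuousAt.continuousWithinAt) fun t ht => ?_
    rw [interior_Icc] at ht
    rw [(hderiv t (Set.Ioo_subset_Icc_self ht)).deriv]
    exact hpos _ (hmem t (Set.Ioo_subset_Icc_self ht)) d hd
  have h01 := hmono (Set.left_mem_Icc.mpr zero_le_one) (Set.right_mem_Icc.mpr zero_le_one)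
    zero_lt_one
  simp only [zero_smul, add_zero, one_smul, d, add_sub_cancel] at h01
  rwa [inner_sub_left, sub_pos]

theorem Convex.injOn_of_inner_fderiv_pos (hU : Convex ℝ U)
    (hdiff : ∀ u ∈ U, DifferentiableAt ℝ q u)
    (hpos : ∀ u ∈ U, ∀ v : E, v ≠ 0 → 0 < ⟪fderiv ℝ q u v, v⟫) :
    Set.InjOn q U := by
  intro x hx y hy hq
  by_contra hxy
  simpa [hq] using hU.inner_sub_sub_pos_of_inner_fderiv_pos hdiff hpos hx hy hxy

end

theorem stmt2_general {p : ℕ} (U : Set (EuclideanSpace ℝ (Fin p)))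
    (hUconv : Convex ℝ U)
    (q : EuclideanSpace ℝ (Fin p) → EuclideanSpace ℝ (Fin p))
    (hdiff : ∀ u ∈ U, DifferentiableAt ℝ q u)
    (hpos : ∀ u ∈ U, ∀ v : EuclideanSpace ℝ (Fin p), v ≠ 0 →
      0 < ⟪fderiv ℝ q u v, v⟫) :
    Set.InjOn q U :=
  hUconv.injOn_of_inner_fderiv_pos hdiff hpos

theorem stmt2 {p : ℕ} (U : Set (EuclideanSpace ℝ (Fin p)))
    (hUconv : Convex ℝ U) (hUopen : IsOpen U)
    (q : EuclideanSpace ℝ (Fin p) → EuclideanSpace ℝ (Fin p))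
    (hdiff : ∀ u ∈ U, DifferentiableAt ℝ q u)
    (hsym : ∀ u ∈ U, ∀ v w : EuclideanSpace ℝ (Fin p),
      ⟪fderiv ℝ q u v, w⟫ = ⟪v, fderiv ℝ q u w⟫)
    (hpos : ∀ u ∈ U, ∀ v : EuclideanSpace ℝ (Fin p), v ≠ 0 →
      0 < ⟪fderiv ℝ q u v, v⟫) :
    Set.InjOn q U :=
  stmt2_general U hUconv q hdiff hpos
end

section
/- Let U ⊂ ℝ^p be compact convex, q : U → ℝ^p continuous, differentiable on the interior of U with symmetric positive definite derivative there, and suppose the image Y := q(U) is convex. Then for every u in the interior of U, q(u) lies in the interior of Y. -/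
/-!
If `q u` lay on the boundary of the convex set `q '' U`, a supporting hyperplane there, with
normal `v`, would make `x ↦ ⟪v, q x⟫` maximal on `U` at the interior point `u`. Its derivative
`⟪v, Dq(u) v⟫` would then vanish, contradicting positive definiteness of `Dq(u)`.
-/

open scoped RealInnerProductSpace

section SupportingHyperplane

variable {E : Type*} [NormedAddCommGroup E] [InnerProductSpace ℝ E] [FiniteDimensional ℝ E]

theorem exists_ne_zero_forall_inner_eq_of_affineSpan_ne_top {Y : Set E} {x : E} (hx : x ∈ Y)
    (hY : affineSpan ℝ Y ≠ ⊤) : ∃ v : E, v ≠ 0 ∧ ∀ y ∈ Y, ⟪v, y⟫ = ⟪v, x⟫ := by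
  set W := (affineSpan ℝ Y).direction
  have hW : W ≠ ⊤ := fun h =>
    hY ((AffineSubspace.direction_eq_top_iff_of_nonempty ⟨x, subset_affineSpan ℝ Y hx⟩).mp h)
  obtain ⟨v, hvW, hv⟩ := Submodule.exists_mem_ne_zero_of_ne_bot
    (fun h : Wᗮ = ⊥ => hW (Submodule.orthogonal_eq_bot_iff.mp h))
  refine ⟨v, hv, fun y hy => ?_⟩
  have hyx : y - x ∈ W := by
    simpa using AffineSubspace.vsub_mem_direction (subset_affineSpan ℝ Y hy)
      (subset_affineSpan ℝ Y hx)
  have := Submodule.inner_left_of_mem_orthogonal hyx hvW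
  rwa [inner_sub_right, sub_eq_zero] at this

theorem Convex.exists_ne_zero_forall_inner_le_of_notMem_interior {Y : Set E} (hY : Convex ℝ Y)
    {x : E} (hx : x ∈ Y) (hx' : x ∉ interior Y) :
    ∃ v : E, v ≠ 0 ∧ ∀ y ∈ Y, ⟪v, y⟫ ≤ ⟪v, x⟫ := by
  by_cases hint : (interior Y).Nonempty
  · obtain ⟨f, hf, hfY⟩ := geometric_hahn_banach_of_nonempty_interior_point hY hx' hint
    refine ⟨(InnerProductSpace.toDual ℝ E).symm f, by simpa using hf, fun y hy => ?_⟩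
    simpa only [InnerProductSpace.toDual_symm_apply] using hfY y hy
  · rw [hY.interior_nonempty_iff_affineSpan_eq_top] at hint
    obtain ⟨v, hv, hvY⟩ := exists_ne_zero_forall_inner_eq_of_affineSpan_ne_top hx hint
    exact ⟨v, hv, fun y hy => (hvY y hy).le⟩

end SupportingHyperplane

theorem inner_fderiv_apply_eq_zero_of_isMaxOn {E F : Type*} [NormedAddCommGroup E]
    [NormedSpace ℝ E] [NormedAddCommGroup F] [InnerProductSpace ℝ F] {f : E → F} {s : Set E}
    {a : E} {w : F} (hf : DifferentiableAt ℝ f a) (hs : s ∈ nhds a)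
    (hmax : IsMaxOn (fun x => ⟪w, f x⟫) s a) (v : E) : ⟪w, fderiv ℝ f a v⟫ = 0 := by
  have hderiv : HasFDerivAt (fun x => ⟪w, f x⟫) ((innerSL ℝ w).comp (fderiv ℝ f a)) a :=
    (innerSL ℝ w).hasFDerivAt.comp a hf.hasFDerivAt
  simpa using congrArg (· v) ((hmax.isLocalMax hs).hasFDerivAt_eq_zero hderiv)

theorem stmt3_general {p : ℕ} (U : Set (EuclideanSpace ℝ (Fin p)))
    (q : EuclideanSpace ℝ (Fin p) → EuclideanSpace ℝ (Fin p))
    (hdiff : ∀ u ∈ interior U, DifferentiableAt ℝ q u)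
    (hpos : ∀ u ∈ interior U, ∀ v : EuclideanSpace ℝ (Fin p), v ≠ 0 →
      0 < ⟪fderiv ℝ q u v, v⟫)
    (hYconv : Convex ℝ (q '' U)) :
    ∀ u ∈ interior U, q u ∈ interior (q '' U) := by
  intro u hu
  by_contra hboundary
  obtain ⟨v, hv, hvY⟩ := hYconv.exists_ne_zero_forall_inner_le_of_notMem_interior
    (Set.mem_image_of_mem q (interior_subset hu)) hboundary
  have hmax : IsMaxOn (fun x => ⟪v, q x⟫) U u := fun x hx => hvY (q x) ⟨x, hx, rfl⟩
  have hzero :=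
    inner_fderiv_apply_eq_zero_of_isMaxOn (hdiff u hu) (mem_interior_iff_mem_nhds.mp hu) hmax v
  rw [real_inner_comm] at hzero
  exact (hpos u hu v hv).ne' hzero

theorem stmt3 {p : ℕ} (U : Set (EuclideanSpace ℝ (Fin p)))
    (hUcomp : IsCompact U) (hUconv : Convex ℝ U)
    (q : EuclideanSpace ℝ (Fin p) → EuclideanSpace ℝ (Fin p))
    (hcont : ContinuousOn q U)
    (hdiff : ∀ u ∈ interior U, DifferentiableAt ℝ q u)
    (hsym : ∀ u ∈ interior U, ∀ v w : EuclideanSpace ℝ (Fin p),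
      ⟪fderiv ℝ q u v, w⟫ = ⟪v, fderiv ℝ q u w⟫)
    (hpos : ∀ u ∈ interior U, ∀ v : EuclideanSpace ℝ (Fin p), v ≠ 0 →
      0 < ⟪fderiv ℝ q u v, v⟫)
    (hYconv : Convex ℝ (q '' U)) :
    ∀ u ∈ interior U, q u ∈ interior (q '' U) :=
  stmt3_general U q hdiff hpos hYconv
end

section
/- Let (A, ‖·‖_A) and (B, ‖·‖_B) be normed spaces, A₀ ⊂ A, Z a finite index set, and φ_z : A₀ → B with φ_z(a*) = b_z for a* ∈ A₀. Let T¹ := {δa/‖δa‖ : δa ≠ 0, a* + δa ∈ A₀}. Suppose (i) each φ_z is uniformly directionally differentiable at a* with derivative map (φ_z)' : T¹ → B (Assumption of differentiability), and (ii) inf_{h ∈ T¹} ∑_{z} ‖(φ_z)'(h)‖_B > 0. Then a* is a locally unique solution of the system φ_z(a) = b_z for all z: there is ε > 0 such that no a ∈ A₀ with 0 < ‖a − a*‖_A < ε solves the system. -/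
/-!
If some `a ≠ a*` in a small ball solved the system, then taking the unit direction `h` from `a*`
to `a` and the step `t = ‖a - a*‖`, every difference quotient of the `φ_z` would vanish. Uniform
directional differentiability, made uniform over the finitely many `z`, then forces every
`‖(φ_z)' h‖` to be small, contradicting the positive lower bound on their sum.
-/

open Filter Topology

lemma exists_pos_forall_of_finite {Z : Type*} [Finite Z] {P : Z → ℝ → Prop}
    (h : ∀ z, ∃ ε > 0, ∀ t, 0 < t → t < ε → P z t) :
    ∃ ε > 0, ∀ t, 0 < t → t < ε → ∀ z, P z t := by
  have hsmall : ∀ᶠ t in 𝓝[>] (0 : ℝ), ∀ z, P z t := eventually_all.2 fun z => by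
    obtain ⟨ε, hε, hP⟩ := h z
    exact (nhdsGT_basis 0).eventually_iff.2 ⟨ε, hε, fun t ht => hP t ht.1 ht.2⟩
  obtain ⟨ε, hε, hP⟩ := (nhdsGT_basis 0).eventually_iff.1 hsmall
  exact ⟨ε, hε, fun t ht₀ htε => hP ⟨ht₀, htε⟩⟩

theorem stmt6_general {A B Z : Type*} [NormedAddCommGroup A] [NormedSpace ℝ A]
    [NormedAddCommGroup B] [NormedSpace ℝ B] [Fintype Z]
    (A₀ : Set A) (astar : A)
    (φ : Z → A → B) (b : Z → B) (hsol : ∀ z, φ z astar = b z)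
    (Dφ : Z → A → B)
    (hdiff : ∀ z : Z, ∀ δ > (0 : ℝ), ∃ ε > (0 : ℝ), ∀ t : ℝ, 0 < t → t < ε →
      ∀ h : A, (∃ a ∈ A₀, a ≠ astar ∧ h = ‖a - astar‖⁻¹ • (a - astar)) →
        astar + t • h ∈ A₀ →
        ‖t⁻¹ • (φ z (astar + t • h) - φ z astar) - Dφ z h‖ ≤ δ)
    (hfullrank : ∃ c > (0 : ℝ), ∀ h : A,
      (∃ a ∈ A₀, a ≠ astar ∧ h = ‖a - astar‖⁻¹ • (a - astar)) →
      c ≤ ∑ z : Z, ‖Dφ z h‖) :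
    ∃ ε > (0 : ℝ), ∀ a ∈ A₀, a ≠ astar → ‖a - astar‖ < ε → ∃ z : Z, φ z a ≠ b z := by
  obtain ⟨c, hc, hfr⟩ := hfullrank
  set δ := c / (Fintype.card Z + 1)
  have hcard : Fintype.card Z * δ < c := by
    rw [mul_div_assoc', div_lt_iff₀ (by positivity)]
    linarith
  obtain ⟨ε, hε, hquot⟩ := exists_pos_forall_of_finite fun z => hdiff z δ (by positivity)
  refine ⟨ε, hε, fun a ha hne hlt => ?_⟩
  by_contra! hsolves
  set h := NormedSpace.normalize (a - astar)
  have hdir : ∃ a' ∈ A₀, a' ≠ astar ∧ h = ‖a' - astar‖⁻¹ • (a' - astar) := ⟨a, ha, hne, rfl⟩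
  have hstep : astar + ‖a - astar‖ • h = a := by
    rw [NormedSpace.norm_smul_normalize, add_sub_cancel]
  have hsmall : ∀ z, ‖Dφ z h‖ ≤ δ := fun z => by
    simpa [hstep, hsolves, hsol] using
      hquot _ (norm_sub_pos_iff.2 hne) hlt z h hdir (hstep.symm ▸ ha)
  have hsum : ∑ z : Z, ‖Dφ z h‖ ≤ Fintype.card Z * δ := by
    simpa using Finset.sum_le_card_nsmul Finset.univ _ δ fun z _ => hsmall z
  linarith [hfr h hdir]

theorem stmt6 {A B Z : Type*} [NormedAddCommGroup A] [NormedSpace ℝ A]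
    [NormedAddCommGroup B] [NormedSpace ℝ B] [Fintype Z]
    (A₀ : Set A) (astar : A) (hastar : astar ∈ A₀)
    (φ : Z → A → B) (b : Z → B) (hsol : ∀ z, φ z astar = b z)
    (Dφ : Z → A → B)
    (hdiff : ∀ z : Z, ∀ δ > (0 : ℝ), ∃ ε > (0 : ℝ), ∀ t : ℝ, 0 < t → t < ε →
      ∀ h : A, (∃ a ∈ A₀, a ≠ astar ∧ h = ‖a - astar‖⁻¹ • (a - astar)) →
        astar + t • h ∈ A₀ →
        ‖t⁻¹ • (φ z (astar + t • h) - φ z astar) - Dφ z h‖ ≤ δ)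
    (hfullrank : ∃ c > (0 : ℝ), ∀ h : A,
      (∃ a ∈ A₀, a ≠ astar ∧ h = ‖a - astar‖⁻¹ • (a - astar)) →
      c ≤ ∑ z : Z, ‖Dφ z h‖) :
    ∃ ε > (0 : ℝ), ∀ a ∈ A₀, a ≠ astar → ‖a - astar‖ < ε → ∃ z : Z, φ z a ≠ b z :=
  stmt6_general A₀ astar φ b hsol Dφ hdiff hfullrank
end

section
/- Let C₀, C₁ be symmetric positive definite p×p matrices whose eigenvalues all lie in an interval [ℓ, L] with 0 < ℓ ≤ L, and let f₀₀, f₀₁, f₁₀, f₁₁ ≥ 0 be nonnegative reals satisfying 4 f₀₀ f₁₁ > (L/ℓ)² (f₀₁ + f₁₀)². Then for all (ξ₀, ξ₁) ∈ ℝ^p × ℝ^p not both zero, f₀₀ ξ₀ᵀC₀ξ₀ + f₀₁ ξ₀ᵀC₀ξ₁ + f₁₀ ξ₁ᵀC₁ξ₀ + f₁₁ ξ₁ᵀC₁ξ₁ > 0. -/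
open Matrix

/-!
Write `a = |ξ₀|`, `b = |ξ₁|`. The diagonal terms are at least `ℓ f₀₀ a²` and `ℓ f₁₁ b²`, while by
Cauchy–Schwarz for the form `Cⱼ` each cross term is at least `-L a b` times its coefficient. So the
block form dominates the binary quadratic `ℓ f₀₀ a² - L (f₀₁ + f₁₀) a b + ℓ f₁₁ b²`, whose
discriminant is negative exactly by the hypothesis `4 f₀₀ f₁₁ > (L/ℓ)² (f₀₁ + f₁₀)²`.
-/

theorem quadratic_pos_of_discrim_neg {R : Type*} [CommRing R] [LinearOrder R]
    [IsStrictOrderedRing R] {A B C : R} (hA : 0 ≤ A) (hd : discrim A B C < 0) {x y : R}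
    (hxy : x ≠ 0 ∨ y ≠ 0) : 0 < A * x ^ 2 + B * x * y + C * y ^ 2 := by
  rw [discrim] at hd
  have hA : 0 < A := hA.lt_of_ne (by rintro rfl; nlinarith [sq_nonneg B])
  obtain rfl | hy := eq_or_ne y 0
  · have hx : x ≠ 0 := hxy.resolve_right (not_not.mpr rfl)
    have : 0 < A * x ^ 2 := by positivity
    simpa using this
  · have hsq : 4 * A * (A * x ^ 2 + B * x * y + C * y ^ 2)
        = (2 * A * x + B * y) ^ 2 + (4 * A * C - B ^ 2) * y ^ 2 := by ring
    nlinarith [sq_nonneg (2 * A * x + B * y), sq_pos_of_ne_zero hy]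

namespace Matrix

theorem IsSymm.dotProduct_mulVec_sq_le {n R : Type*} [Fintype n] [DecidableEq n]
    [CommRing R] [LinearOrder R] [IsStrictOrderedRing R] {C : Matrix n n R} (hC : C.IsSymm)
    (hnn : ∀ x, 0 ≤ x ⬝ᵥ C *ᵥ x) (x y : n → R) :
    (x ⬝ᵥ C *ᵥ y) ^ 2 ≤ (x ⬝ᵥ C *ᵥ x) * (y ⬝ᵥ C *ᵥ y) := by
  simp only [← toBilin'_apply'] at hnn ⊢
  exact (toBilin' C).apply_sq_le_of_symm hnn
    (LinearMap.BilinForm.isSymm_iff.mp (isSymm_toBilin'_iff_isSymm.mpr hC)) x y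

theorem dotProduct_self_nonneg_real {n : Type*} [Fintype n] (x : n → ℝ) : 0 ≤ x ⬝ᵥ x := by
  simpa using dotProduct_star_self_nonneg x

theorem IsSymm.abs_dotProduct_mulVec_le {n : Type*} [Fintype n] [DecidableEq n]
    {C : Matrix n n ℝ} (hC : C.IsSymm) (hnn : ∀ x, 0 ≤ x ⬝ᵥ C *ᵥ x) {L : ℝ} (hL : 0 ≤ L)
    (hCL : ∀ x, x ⬝ᵥ C *ᵥ x ≤ L * (x ⬝ᵥ x)) (x y : n → ℝ) :
    |x ⬝ᵥ C *ᵥ y| ≤ L * (√(x ⬝ᵥ x) * √(y ⬝ᵥ y)) := by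
  have hx := dotProduct_self_nonneg_real x
  have hy := dotProduct_self_nonneg_real y
  refine abs_le_of_sq_le_sq ?_ (by positivity)
  calc (x ⬝ᵥ C *ᵥ y) ^ 2 ≤ (x ⬝ᵥ C *ᵥ x) * (y ⬝ᵥ C *ᵥ y) := hC.dotProduct_mulVec_sq_le hnn x y
    _ ≤ (L * (x ⬝ᵥ x)) * (L * (y ⬝ᵥ y)) := mul_le_mul (hCL x) (hCL y) (hnn y) (mul_nonneg hL hx)
    _ = (L * (√(x ⬝ᵥ x) * √(y ⬝ᵥ y))) ^ 2 := by
      rw [mul_pow, mul_pow, Real.sq_sqrt hx, Real.sq_sqrt hy]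
      ring

end Matrix

theorem stmt10_general {p : ℕ} (C₀ C₁ : Matrix (Fin p) (Fin p) ℝ)
    (hs₀ : C₀.IsSymm) (hs₁ : C₁.IsSymm)
    (l L : ℝ) (hl : 0 < l) (hlL : l ≤ L)
    (hC₀l : ∀ ξ : Fin p → ℝ, l * (ξ ⬝ᵥ ξ) ≤ ξ ⬝ᵥ (C₀ *ᵥ ξ))
    (hC₀L : ∀ ξ : Fin p → ℝ, ξ ⬝ᵥ (C₀ *ᵥ ξ) ≤ L * (ξ ⬝ᵥ ξ))
    (hC₁l : ∀ ξ : Fin p → ℝ, l * (ξ ⬝ᵥ ξ) ≤ ξ ⬝ᵥ (C₁ *ᵥ ξ))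
    (hC₁L : ∀ ξ : Fin p → ℝ, ξ ⬝ᵥ (C₁ *ᵥ ξ) ≤ L * (ξ ⬝ᵥ ξ))
    (f₀₀ f₀₁ f₁₀ f₁₁ : ℝ)
    (h₀₀ : 0 ≤ f₀₀) (h₀₁ : 0 ≤ f₀₁) (h₁₀ : 0 ≤ f₁₀) (h₁₁ : 0 ≤ f₁₁)
    (hkey : 4 * f₀₀ * f₁₁ > (L / l) ^ 2 * (f₀₁ + f₁₀) ^ 2)
    (ξ₀ ξ₁ : Fin p → ℝ) (hne : ¬ (ξ₀ = 0 ∧ ξ₁ = 0)) :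
    0 < f₀₀ * (ξ₀ ⬝ᵥ (C₀ *ᵥ ξ₀)) + f₀₁ * (ξ₀ ⬝ᵥ (C₀ *ᵥ ξ₁)) +
        f₁₀ * (ξ₁ ⬝ᵥ (C₁ *ᵥ ξ₀)) + f₁₁ * (ξ₁ ⬝ᵥ (C₁ *ᵥ ξ₁)) := by
  have hL : 0 ≤ L := hl.le.trans hlL
  have hnn {C : Matrix (Fin p) (Fin p) ℝ} (hCl : ∀ ξ, l * (ξ ⬝ᵥ ξ) ≤ ξ ⬝ᵥ (C *ᵥ ξ)) (ξ) :
      0 ≤ ξ ⬝ᵥ C *ᵥ ξ := (mul_nonneg hl.le (dotProduct_self_nonneg_real ξ)).trans (hCl ξ)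
  set a := √(ξ₀ ⬝ᵥ ξ₀)
  set b := √(ξ₁ ⬝ᵥ ξ₁)
  have ha : a ^ 2 = ξ₀ ⬝ᵥ ξ₀ := Real.sq_sqrt (dotProduct_self_nonneg_real ξ₀)
  have hb : b ^ 2 = ξ₁ ⬝ᵥ ξ₁ := Real.sq_sqrt (dotProduct_self_nonneg_real ξ₁)
  have hab : a ≠ 0 ∨ b ≠ 0 := by
    rw [← not_and_or]
    simpa only [a, b, Real.sqrt_eq_zero (dotProduct_self_nonneg_real _), dotProduct_self_eq_zero]
      using hne
  have hdisc : discrim (l * f₀₀) (-(L * (f₀₁ + f₁₀))) (l * f₁₁) < 0 := by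
    rw [gt_iff_lt, div_pow, div_mul_eq_mul_div, div_lt_iff₀ (by positivity)] at hkey
    rw [discrim]
    linarith
  have hquad := quadratic_pos_of_discrim_neg (mul_nonneg hl.le h₀₀) hdisc hab
  have h00 : l * a ^ 2 ≤ ξ₀ ⬝ᵥ C₀ *ᵥ ξ₀ := ha ▸ hC₀l ξ₀
  have h11 : l * b ^ 2 ≤ ξ₁ ⬝ᵥ C₁ *ᵥ ξ₁ := hb ▸ hC₁l ξ₁
  have h01 : -(L * (a * b)) ≤ ξ₀ ⬝ᵥ C₀ *ᵥ ξ₁ :=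
    neg_le_of_abs_le (hs₀.abs_dotProduct_mulVec_le (hnn hC₀l) hL hC₀L ξ₀ ξ₁)
  have h10 : -(L * (b * a)) ≤ ξ₁ ⬝ᵥ C₁ *ᵥ ξ₀ :=
    neg_le_of_abs_le (hs₁.abs_dotProduct_mulVec_le (hnn hC₁l) hL hC₁L ξ₁ ξ₀)
  linarith [mul_le_mul_of_nonneg_left h00 h₀₀, mul_le_mul_of_nonneg_left h11 h₁₁,
    mul_le_mul_of_nonneg_left h01 h₀₁, mul_le_mul_of_nonneg_left h10 h₁₀]

theorem stmt10 {p : ℕ} (C₀ C₁ : Matrix (Fin p) (Fin p) ℝ)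
    (hs₀ : C₀.IsSymm) (hs₁ : C₁.IsSymm) (hpd₀ : C₀.PosDef) (hpd₁ : C₁.PosDef)
    (l L : ℝ) (hl : 0 < l) (hlL : l ≤ L)
    (hC₀l : ∀ ξ : Fin p → ℝ, l * (ξ ⬝ᵥ ξ) ≤ ξ ⬝ᵥ (C₀ *ᵥ ξ))
    (hC₀L : ∀ ξ : Fin p → ℝ, ξ ⬝ᵥ (C₀ *ᵥ ξ) ≤ L * (ξ ⬝ᵥ ξ))
    (hC₁l : ∀ ξ : Fin p → ℝ, l * (ξ ⬝ᵥ ξ) ≤ ξ ⬝ᵥ (C₁ *ᵥ ξ))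
    (hC₁L : ∀ ξ : Fin p → ℝ, ξ ⬝ᵥ (C₁ *ᵥ ξ) ≤ L * (ξ ⬝ᵥ ξ))
    (f₀₀ f₀₁ f₁₀ f₁₁ : ℝ)
    (h₀₀ : 0 ≤ f₀₀) (h₀₁ : 0 ≤ f₀₁) (h₁₀ : 0 ≤ f₁₀) (h₁₁ : 0 ≤ f₁₁)
    (hkey : 4 * f₀₀ * f₁₁ > (L / l) ^ 2 * (f₀₁ + f₁₀) ^ 2)
    (ξ₀ ξ₁ : Fin p → ℝ) (hne : ¬ (ξ₀ = 0 ∧ ξ₁ = 0)) :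
    0 < f₀₀ * (ξ₀ ⬝ᵥ (C₀ *ᵥ ξ₀)) + f₀₁ * (ξ₀ ⬝ᵥ (C₀ *ᵥ ξ₁)) +
        f₁₀ * (ξ₁ ⬝ᵥ (C₁ *ᵥ ξ₀)) + f₁₁ * (ξ₁ ⬝ᵥ (C₁ *ᵥ ξ₁)) :=
  stmt10_general C₀ C₁ hs₀ hs₁ l L hl hlL hC₀l hC₀L hC₁l hC₁L f₀₀ f₀₁ f₁₀ f₁₁ h₀₀ h₀₁ h₁₀ h₁₁ hkey
    ξ₀ ξ₁ hne
end

section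
/- Let q : U → ℝ^p be C² on an open set U ⊂ ℝ^p with Dq(u) invertible, let f : ℝ^p → ℝ be C¹, and h : U → ℝ^p be C¹. Then div( f(q(u)) · det(Dq(u)) · (Dq(u))^{-1} h(u) ) = det(Dq(u)) · ⟨∇f(q(u)), h(u)⟩ + f(q(u)) · ⟨cof(Dq(u)), Dh(u)⟩, where cof(C) = det(C) C^{-1} and ⟨A, B⟩ = ∑_{i,j} A_{ij} B_{ij}. -/
open Matrix

/-- The Jacobian matrix of a map `g : ℝ^p → ℝ^p` at `u`:
`(jacobian g u) i j = ∂ g_i / ∂ u_j`. -/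
noncomputable def jacobian {p : ℕ} (g : (Fin p → ℝ) → (Fin p → ℝ))
    (u : Fin p → ℝ) : Matrix (Fin p) (Fin p) ℝ :=
  Matrix.of fun i j => fderiv ℝ g u (Pi.single j 1) i

/-- The cofactor matrix `cof C = det C • C⁻¹`. -/
noncomputable def cofactor {p : ℕ} (C : Matrix (Fin p) (Fin p) ℝ) :
    Matrix (Fin p) (Fin p) ℝ :=
  C.det • C⁻¹

/-!
Near `u` the Jacobian `Dq` is invertible, so `det (Dq) • (Dq)⁻¹ = adj (Dq)` and the field is
`f (q) • adj (Dq) h`. The product rule splits its divergence into `⟨∇(f ∘ q), adj (Dq) h⟩` plus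
`f (q) · div (adj (Dq) h)`. By the chain rule the first term is
`⟨∇f (q), Dq adj (Dq) h⟩ = det (Dq) ⟨∇f (q), h⟩`. The second is `⟨adj (Dq), Dh⟩` plus the pairing
of `h` with the column divergences of `adj (Dq)`, which vanish (Piola's identity): differentiating
`adj (Dq)ᵢⱼ = det (Dq with row j replaced by eᵢ)` row by row and summing over `i` pairs the
symmetric second derivatives `∂ᵢ∂ₗ qₖ` with determinants that are antisymmetric in `(i, l)`.
-/

theorem sum_sum_mul_eq_zero_of_symm_of_antisymm {n R : Type*} [Fintype n] [CommRing R]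
    [NoZeroDivisors R] [CharZero R] {S T : n → n → R} (hS : ∀ i l, S i l = S l i)
    (hT : ∀ i l, T i l = -T l i) :
    ∑ i, ∑ l, S i l * T i l = 0 := by
  refine CharZero.eq_neg_self_iff.1 ?_
  conv_lhs => rw [Finset.sum_comm]
  simp only [← Finset.sum_neg_distrib]
  refine Finset.sum_congr rfl fun l _ => Finset.sum_congr rfl fun i _ => ?_
  rw [hS, hT, mul_neg]

namespace Matrix

section Algebra

variable {n R : Type*} [Fintype n] [DecidableEq n] [CommRing R]

theorem det_updateRow_eq_sum (M : Matrix n n R) (k : n) (r : n → R) :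
    (M.updateRow k r).det = ∑ l, r l * (M.updateRow k (Pi.single l 1)).det := by
  let L := (detRowAlternating : (n → R) [⋀^n]→ₗ[R] R).toMultilinearMap.toLinearMap M k
  have hL : ∀ x, (M.updateRow k x).det = L x := fun _ => rfl
  simp only [hL]
  conv_lhs => rw [pi_eq_sum_univ' r, map_sum]
  simp only [map_smul, smul_eq_mul]

theorem det_updateRow_updateRow_swap (M : Matrix n n R) {j k : n} (hkj : k ≠ j) (a b : n → R) :
    ((M.updateRow j a).updateRow k b).det = -((M.updateRow j b).updateRow k a).det := by
  refine (congrArg det ?_).trans ((detRowAlternating : (n → R) [⋀^n]→ₗ[R] R).map_swap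
    ((M.updateRow j b).updateRow k a) hkj)
  funext r
  change _ = (M.updateRow j b).updateRow k a (Equiv.swap k j r)
  rcases eq_or_ne r k with rfl | hrk
  · simp [updateRow_ne hkj.symm]
  rcases eq_or_ne r j with rfl | hrj
  · simp [hrk]
  · simp [hrj, hrk, Equiv.swap_apply_of_ne_of_ne hrk hrj]

theorem sum_det_updateRow_single_updateRow_eq_zero [NoZeroDivisors R] [CharZero R]
    (M : Matrix n n R) {j k : n} (hkj : k ≠ j) {b : n → n → R} (hb : ∀ i l, b i l = b l i) :
    ∑ i, ((M.updateRow j (Pi.single i 1)).updateRow k (b i)).det = 0 := by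
  simp_rw [det_updateRow_eq_sum _ k (b _)]
  exact sum_sum_mul_eq_zero_of_symm_of_antisymm hb fun i l =>
    det_updateRow_updateRow_swap M hkj _ _

theorem vecMul_dotProduct_adjugate_mulVec (A : Matrix n n R) (x y : n → R) :
    (x ᵥ* A) ⬝ᵥ (A.adjugate *ᵥ y) = A.det * (x ⬝ᵥ y) := by
  rw [← dotProduct_mulVec, mulVec_mulVec, mul_adjugate, smul_mulVec, one_mulVec,
    dotProduct_smul, smul_eq_mul]

end Algebra

section Calculus

variable {𝕜 n E : Type*} [NontriviallyNormedField 𝕜] [DecidableEq n]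
  [NormedAddCommGroup E] [NormedSpace 𝕜 E] {A : E → Matrix n n 𝕜} {A' : n → E →L[𝕜] (n → 𝕜)}
  {u : E}

theorem hasFDerivAt_updateRow_of_rows (hA : ∀ k, HasFDerivAt (fun v => A v k) (A' k) u)
    (j : n) (c : n → 𝕜) (k : n) :
    HasFDerivAt (fun v => (A v).updateRow j c k) (Function.update A' j 0 k) u := by
  rcases eq_or_ne k j with rfl | hkj
  · simpa using hasFDerivAt_const (𝕜 := 𝕜) c u
  · simpa [updateRow_ne hkj, hkj] using hA k

variable [Fintype n]

noncomputable def detRowContinuousMultilinear :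
    ContinuousMultilinearMap 𝕜 (fun _ : n => n → 𝕜) 𝕜 :=
  { (detRowAlternating : (n → 𝕜) [⋀^n]→ₗ[𝕜] 𝕜).toMultilinearMap with
    cont := continuous_id.matrix_det }

theorem hasFDerivAt_det_of_rows (hA : ∀ k, HasFDerivAt (fun v => A v k) (A' k) u) :
    HasFDerivAt (fun v => (A v).det)
      (∑ k, (detRowContinuousMultilinear.toContinuousLinearMap (A u) k) ∘L A' k) u :=
  HasFDerivAt.multilinear_comp (detRowContinuousMultilinear (n := n) (𝕜 := 𝕜)) hA

theorem fderiv_det_of_rows_apply (hA : ∀ k, HasFDerivAt (fun v => A v k) (A' k) u) (w : E) :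
    fderiv 𝕜 (fun v => (A v).det) u w = ∑ k, ((A u).updateRow k (A' k w)).det := by
  simp only [(hasFDerivAt_det_of_rows hA).fderiv, _root_.sum_apply,
    ContinuousLinearMap.comp_apply]
  rfl

theorem differentiableAt_adjugate_apply_of_rows
    (hA : ∀ k, HasFDerivAt (fun v => A v k) (A' k) u) (i j : n) :
    DifferentiableAt 𝕜 (fun v => (A v).adjugate i j) u := by
  simp_rw [adjugate_apply]
  exact (hasFDerivAt_det_of_rows (hasFDerivAt_updateRow_of_rows hA j _)).differentiableAt

theorem fderiv_adjugate_apply_of_rows (hA : ∀ k, HasFDerivAt (fun v => A v k) (A' k) u)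
    (i j : n) (w : E) :
    fderiv 𝕜 (fun v => (A v).adjugate i j) u w =
      ∑ k, (((A u).updateRow j (Pi.single i 1)).updateRow k (Function.update A' j 0 k w)).det := by
  simp_rw [adjugate_apply]
  exact fderiv_det_of_rows_apply (hasFDerivAt_updateRow_of_rows hA j _) w

end Calculus

end Matrix

section Divergence

variable {𝕜 n : Type*} [NontriviallyNormedField 𝕜] [Fintype n] {u : n → 𝕜}
  {A : (n → 𝕜) → Matrix n n 𝕜} {h : (n → 𝕜) → n → 𝕜}

theorem differentiableAt_mulVec (hA : ∀ i j, DifferentiableAt 𝕜 (fun v => A v i j) u)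
    (hh : DifferentiableAt 𝕜 h u) : DifferentiableAt 𝕜 (fun v => A v *ᵥ h v) u :=
  differentiableAt_pi.2 fun i =>
    DifferentiableAt.fun_sum fun j _ => (hA i j).mul (differentiableAt_pi.1 hh j)

variable [DecidableEq n] {X Y : (n → 𝕜) → n → 𝕜}

noncomputable def divergence (X : (n → 𝕜) → n → 𝕜) (u : n → 𝕜) : 𝕜 :=
  ∑ i, fderiv 𝕜 (fun v => X v i) u (Pi.single i 1)

theorem Filter.EventuallyEq.divergence_eq (h : X =ᶠ[nhds u] Y) :
    divergence X u = divergence Y u :=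
  Finset.sum_congr rfl fun i _ => by
    have hi : (fun v => X v i) =ᶠ[nhds u] fun v => Y v i := h.mono fun v hv => congrFun hv i
    rw [hi.fderiv_eq]

theorem divergence_smul {φ : (n → 𝕜) → 𝕜} (hφ : DifferentiableAt 𝕜 φ u)
    (hX : DifferentiableAt 𝕜 X u) :
    divergence (fun v => φ v • X v) u =
      ∑ i, fderiv 𝕜 φ u (Pi.single i 1) * X u i + φ u * divergence X u := by
  simp only [divergence, Pi.smul_apply, smul_eq_mul, Finset.mul_sum, ← Finset.sum_add_distrib]
  refine Finset.sum_congr rfl fun i _ => ?_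
  rw [fderiv_fun_mul hφ (differentiableAt_pi.1 hX i)]
  simp only [_root_.add_apply, _root_.smul_apply, smul_eq_mul]
  ring

theorem divergence_mulVec (hA : ∀ i j, DifferentiableAt 𝕜 (fun v => A v i j) u)
    (hh : DifferentiableAt 𝕜 h u) :
    divergence (fun v => A v *ᵥ h v) u =
      ∑ i, ∑ j, A u i j * fderiv 𝕜 h u (Pi.single i 1) j +
        ∑ j, h u j * ∑ i, fderiv 𝕜 (fun v => A v i j) u (Pi.single i 1) := by
  have hterm : ∀ i, fderiv 𝕜 (fun v => ∑ j, A v i j * h v j) u (Pi.single i 1) =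
      ∑ j, (A u i j * fderiv 𝕜 h u (Pi.single i 1) j +
        h u j * fderiv 𝕜 (fun v => A v i j) u (Pi.single i 1)) := fun i => by
    rw [fderiv_fun_sum (A := fun j v => A v i j * h v j)
      fun j _ => (hA i j).mul (differentiableAt_pi.1 hh j), _root_.sum_apply]
    refine Finset.sum_congr rfl fun j _ => ?_
    rw [fderiv_fun_mul (hA i j) (differentiableAt_pi.1 hh j), fderiv_apply hh]
    simp only [_root_.add_apply, _root_.smul_apply, smul_eq_mul, ContinuousLinearMap.comp_apply,
      ContinuousLinearMap.proj_apply]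
  simp only [divergence, mulVec, dotProduct, hterm, Finset.sum_add_distrib, Finset.mul_sum]
  exact congrArg _ Finset.sum_comm

end Divergence

section Jacobian

variable {p : ℕ} {q : (Fin p → ℝ) → Fin p → ℝ} {u : Fin p → ℝ}

theorem hasFDerivAt_jacobian_row (hq : ContDiffAt ℝ 2 q u) (k : Fin p) :
    HasFDerivAt (fun v => jacobian q v k)
      (ContinuousLinearMap.pi fun l => (ContinuousLinearMap.proj k ∘L
        ContinuousLinearMap.apply ℝ _ (Pi.single l 1)) ∘L fderiv ℝ (fderiv ℝ q) u) u := by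
  have hΦ : HasFDerivAt (fderiv ℝ q) (fderiv ℝ (fderiv ℝ q) u) u :=
    ((hq.fderiv_right (m := 1) le_rfl).differentiableAt one_ne_zero).hasFDerivAt
  refine hasFDerivAt_pi.2 fun l => ?_
  exact ((ContinuousLinearMap.proj (R := ℝ) (φ := fun _ : Fin p => ℝ) k ∘L
    ContinuousLinearMap.apply ℝ (Fin p → ℝ) (Pi.single l 1)).hasFDerivAt.comp u hΦ :)

theorem sum_fderiv_adjugate_jacobian_eq_zero (hq : ContDiffAt ℝ 2 q u) (j : Fin p) :
    ∑ i, fderiv ℝ (fun v => (jacobian q v).adjugate i j) u (Pi.single i 1) = 0 := by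
  have hsymm := hq.isSymmSndFDerivAt (by simp [minSmoothness_of_isRCLikeNormedField])
  simp_rw [fderiv_adjugate_apply_of_rows (hasFDerivAt_jacobian_row hq)]
  rw [Finset.sum_comm]
  refine Finset.sum_eq_zero fun k _ => ?_
  rcases eq_or_ne k j with rfl | hkj
  · exact Finset.sum_eq_zero fun i _ => det_eq_zero_of_row_eq_zero k fun l => by simp
  · simp only [Function.update_of_ne hkj]
    exact sum_det_updateRow_single_updateRow_eq_zero _ hkj fun i l => congrFun (hsymm _ _) k

theorem fderiv_comp_apply_single_eq_vecMul_jacobian {f : (Fin p → ℝ) → ℝ}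
    (hf : DifferentiableAt ℝ f (q u)) (hq : DifferentiableAt ℝ q u) (i : Fin p) :
    fderiv ℝ (fun v => f (q v)) u (Pi.single i 1) =
      ((fun k => fderiv ℝ f (q u) (Pi.single k 1)) ᵥ* jacobian q u) i := by
  rw [fderiv_fun_comp u hf hq, ContinuousLinearMap.comp_apply]
  conv_lhs => rw [pi_eq_sum_univ' (fderiv ℝ q u (Pi.single i 1)), map_sum]
  simp [vecMul, dotProduct, jacobian, mul_comm]

theorem cofactor_eq_adjugate {C : Matrix (Fin p) (Fin p) ℝ} (hC : IsUnit C.det) :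
    cofactor C = C.adjugate := by
  rw [cofactor, inv_def, smul_smul, Ring.mul_inverse_cancel _ hC, one_smul]

end Jacobian

theorem stmt12 {p : ℕ} (U : Set (Fin p → ℝ)) (hU : IsOpen U)
    (q h : (Fin p → ℝ) → (Fin p → ℝ)) (f : (Fin p → ℝ) → ℝ)
    (hq : ContDiffOn ℝ 2 q U)
    (hinv : ∀ u ∈ U, IsUnit (jacobian q u).det)
    (hf : ContDiff ℝ 1 f) (hh : ContDiffOn ℝ 1 h U)
    (u : Fin p → ℝ) (hu : u ∈ U) :
    (∑ i, fderiv ℝ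
        (fun v => f (q v) * (jacobian q v).det * (((jacobian q v)⁻¹) *ᵥ h v) i)
        u (Pi.single i 1))
    = (jacobian q u).det * (∑ i, fderiv ℝ f (q u) (Pi.single i 1) * h u i)
      + f (q u) * ∑ i, ∑ j,
          cofactor (jacobian q u) i j * fderiv ℝ h u (Pi.single i 1) j := by
  have hUu : U ∈ nhds u := hU.mem_nhds hu
  have hqu : ContDiffAt ℝ 2 q u := hq.contDiffAt hUu
  have hqd : DifferentiableAt ℝ q u := hqu.differentiableAt (by norm_num)
  have hfd : DifferentiableAt ℝ f (q u) := hf.differentiable one_ne_zero (q u)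
  have hhd : DifferentiableAt ℝ h u := (hh.contDiffAt hUu).differentiableAt one_ne_zero
  have hadj := differentiableAt_adjugate_apply_of_rows (hasFDerivAt_jacobian_row hqu)
  have hfield : (fun v i => f (q v) * (jacobian q v).det * ((jacobian q v)⁻¹ *ᵥ h v) i)
      =ᶠ[nhds u] fun v => f (q v) • ((jacobian q v).adjugate *ᵥ h v) := by
    filter_upwards [hUu] with v hv
    ext i
    rw [← cofactor_eq_adjugate (hinv v hv), cofactor, smul_mulVec]
    simp only [Pi.smul_apply, smul_eq_mul, mul_assoc]
  change divergence _ u = _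
  rw [hfield.divergence_eq,
    divergence_smul (φ := fun v => f (q v)) (hfd.comp u hqd) (differentiableAt_mulVec hadj hhd),
    divergence_mulVec hadj hhd]
  simp only [sum_fderiv_adjugate_jacobian_eq_zero hqu, mul_zero, Finset.sum_const_zero, add_zero,
    fderiv_comp_apply_single_eq_vecMul_jacobian hfd hqd, cofactor_eq_adjugate (hinv u hu)]
  exact congrArg (· + _) (vecMul_dotProduct_adjugate_mulVec _ _ _)
end

section
/- Piola's identity: if q : U → ℝ^p is C² on an open set U ⊂ ℝ^p with invertible Jacobian Dq, then each column of the cofactor matrix is divergence-free: for every j, ∑_{i=1}^p ∂/∂u_i [cof(Dq(u))]_{ij} = 0. -/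
/-!
Near `u` the cofactor matrix of `Dq` is its adjugate, a polynomial in the entries of `Dq`.
Differentiating the Leibniz expansion of `adj(Dq)_{ij}` in the direction `e_i` produces, for each
column `l ≠ i`, terms containing the second derivative `∂_i ∂_l q_m`. Composing the permutation with
the transposition `(i l)` flips its sign, so by the symmetry of second derivatives the terms indexed
by `(i, l)` and by `(l, i)` cancel.
-/
open Matrix

open Finset

section Algebra

variable {n R : Type*} [Fintype n] [DecidableEq n] [CommRing R]

namespace Matrix

theorem adjugate_apply_eq_sum_perm (A : Matrix n n R) (i j : n) :
    adjugate A i j = ∑ σ ∈ univ.filter (fun σ : Equiv.Perm n => σ i = j),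
      ((Equiv.Perm.sign σ : ℤ) : R) * ∏ k ∈ univ.erase i, A (σ k) k := by
  rw [adjugate_apply, det_apply', ← sum_filter_add_sum_filter_not univ (fun σ => σ i = j)]
  have hvanish : ∀ σ ∈ univ.filter (fun σ : Equiv.Perm n => ¬ σ i = j),
      ((Equiv.Perm.sign σ : ℤ) : R) * ∏ k, (A.updateRow j (Pi.single i 1)) (σ k) k = 0 := by
    intro σ hσ
    have hne : σ.symm j ≠ i := fun h => (mem_filter.mp hσ).2 (by rw [← h, Equiv.apply_symm_apply])
    refine mul_eq_zero_of_right _ (prod_eq_zero (mem_univ (σ.symm j)) ?_)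
    rw [Equiv.apply_symm_apply, updateRow_self, Pi.single_eq_of_ne hne]
  rw [sum_eq_zero hvanish, add_zero]
  refine sum_congr rfl fun σ hσ => ?_
  have hσi : σ i = j := (mem_filter.mp hσ).2
  rw [← mul_prod_erase _ _ (mem_univ i), hσi, updateRow_self, Pi.single_eq_same, one_mul]
  refine congrArg _ (prod_congr rfl fun k hk => congrFun (updateRow_ne fun h => ?_) k)
  exact (mem_erase.mp hk).1 (σ.injective (h.trans hσi.symm))

end Matrix

/-- The part of the derivative of `adjugate A i j` in which the factor of column `l` of the Leibniz
expansion is differentiated, `D` being the derivative of `A` in the chosen direction. -/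
def adjugateDerivTerm (A D : Matrix n n R) (j i l : n) : R :=
  ∑ σ ∈ univ.filter (fun σ : Equiv.Perm n => σ i = j),
    ((Equiv.Perm.sign σ : ℤ) : R) * ((∏ k ∈ (univ.erase i).erase l, A (σ k) k) * D (σ l) l)

theorem adjugateDerivTerm_add_swap (A : Matrix n n R) {B : n → Matrix n n R}
    (hB : ∀ i l m, B i m l = B l m i) (j : n) {i l : n} (hil : i ≠ l) :
    adjugateDerivTerm A (B i) j i l + adjugateDerivTerm A (B l) j l i = 0 := by
  rw [← eq_neg_iff_add_eq_zero, adjugateDerivTerm, adjugateDerivTerm, ← sum_neg_distrib]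
  refine sum_nbij' (· * Equiv.swap i l) (· * Equiv.swap i l) ?_ ?_ ?_ ?_ fun σ _ => ?_
  · intro σ hσ
    simpa [Equiv.swap_apply_right] using hσ
  · intro σ hσ
    simpa [Equiv.swap_apply_left] using hσ
  · intro σ _
    simp [mul_assoc]
  · intro σ _
    simp [mul_assoc]
  have hsign : ((Equiv.Perm.sign (σ * Equiv.swap i l) : ℤ) : R)
      = -((Equiv.Perm.sign σ : ℤ) : R) := by
    simp [Equiv.Perm.sign_mul, Equiv.Perm.sign_swap hil]
  have hprod : ∏ k ∈ (univ.erase l).erase i, A ((σ * Equiv.swap i l) k) k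
      = ∏ k ∈ (univ.erase i).erase l, A (σ k) k := by
    rw [erase_right_comm]
    refine prod_congr rfl fun k hk => ?_
    obtain ⟨hkl, hki⟩ : k ≠ l ∧ k ≠ i := by simpa using hk
    rw [Equiv.Perm.mul_apply, Equiv.swap_apply_of_ne_of_ne hki hkl]
  rw [hsign, hprod, Equiv.Perm.mul_apply, Equiv.swap_apply_left, hB]
  ring

end Algebra

theorem sum_sum_erase_eq_zero_of_antisymm {n M : Type*} [Fintype n] [DecidableEq n]
    [AddCommMonoid M] {T : n → n → M} (hT : ∀ i l, i ≠ l → T i l + T l i = 0) :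
    ∑ i, ∑ l ∈ univ.erase i, T i l = 0 := by
  rw [← sum_finset_product' univ.offDiag _ _ (by simp [and_comm, eq_comm])]
  refine sum_involution (fun x _ => x.swap) (fun x hx => hT _ _ (mem_offDiag.mp hx).2.2)
    (fun x hx _ h => (mem_offDiag.mp hx).2.2 (congrArg Prod.snd h))
    (fun x hx => mem_offDiag.mpr ?_) (fun x _ => x.swap_swap)
  obtain ⟨-, -, h⟩ := mem_offDiag.mp hx
  simpa using Ne.symm h

section Analysis

variable {𝕜 E : Type*} [NontriviallyNormedField 𝕜] [NormedAddCommGroup E] [NormedSpace 𝕜 E]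

theorem fderiv_adjugate_apply {n : Type*} [Fintype n] [DecidableEq n] {M : E → Matrix n n 𝕜}
    {u : E} (hM : ∀ m k, DifferentiableAt 𝕜 (fun v => M v m k) u) (i j : n) (x : E) :
    fderiv 𝕜 (fun v => (M v).adjugate i j) u x = ∑ l ∈ univ.erase i,
      adjugateDerivTerm (M u) (of fun m k => fderiv 𝕜 (fun v => M v m k) u x) j i l := by
  simp_rw [adjugate_apply_eq_sum_perm]
  have hderiv := HasFDerivAt.fun_sum (u := univ.filter (fun σ : Equiv.Perm n => σ i = j))
    fun σ _ => ((HasFDerivAt.finsetProd (u := univ.erase i)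
      fun k _ => (hM (σ k) k).hasFDerivAt).const_mul ((Equiv.Perm.sign σ : ℤ) : 𝕜))
  rw [hderiv.fderiv]
  simp only [adjugateDerivTerm, FunLike.coe_sum, Finset.sum_apply, FunLike.coe_smul,
    Pi.smul_apply, smul_eq_mul, Finset.mul_sum, of_apply]
  exact sum_comm

variable {ι : Type*} [Fintype ι] {f : E → ι → 𝕜} {u : E}

theorem ContDiffAt.hasFDerivAt_fderiv_apply_apply (hf : ContDiffAt 𝕜 2 f u) (x : E) (k : ι) :
    HasFDerivAt (fun v => fderiv 𝕜 f v x k)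
      ((ContinuousLinearMap.proj k ∘L ContinuousLinearMap.apply 𝕜 (ι → 𝕜) x) ∘L
        fderiv 𝕜 (fderiv 𝕜 f) u) u :=
  (ContinuousLinearMap.proj (R := 𝕜) (φ := fun _ : ι => 𝕜) k ∘L
    ContinuousLinearMap.apply 𝕜 (ι → 𝕜) x).hasFDerivAt.comp u
    ((hf.fderiv_right (m := 1) (by norm_num)).differentiableAt one_ne_zero).hasFDerivAt

theorem ContDiffAt.fderiv_fderiv_apply_apply_comm [IsRCLikeNormedField 𝕜]
    (hf : ContDiffAt 𝕜 2 f u) (x y : E) (k : ι) :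
    fderiv 𝕜 (fun v => fderiv 𝕜 f v x k) u y = fderiv 𝕜 (fun v => fderiv 𝕜 f v y k) u x := by
  rw [(hf.hasFDerivAt_fderiv_apply_apply x k).fderiv,
    (hf.hasFDerivAt_fderiv_apply_apply y k).fderiv]
  exact congrFun ((hf.isSymmSndFDerivAt (by simp)) y x) k

end Analysis

theorem cofactor_eq_adjugate_s13 {p : ℕ} {A : Matrix (Fin p) (Fin p) ℝ} (h : IsUnit A.det) :
    cofactor A = A.adjugate := by
  rw [cofactor, Matrix.inv_def, smul_smul, Ring.mul_inverse_cancel _ h, one_smul]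

/-- Piola's identity: each column of the cofactor matrix of the Jacobian of a
`C²` map with invertible Jacobian is divergence-free. -/
theorem stmt13 {p : ℕ} (U : Set (Fin p → ℝ)) (hU : IsOpen U)
    (q : (Fin p → ℝ) → (Fin p → ℝ))
    (hq : ContDiffOn ℝ 2 q U)
    (hinv : ∀ u ∈ U, IsUnit (jacobian q u).det)
    (u : Fin p → ℝ) (hu : u ∈ U) (j : Fin p) :
    ∑ i, fderiv ℝ (fun v => cofactor (jacobian q v) i j) u (Pi.single i 1) = 0 := by
  have hqu : ContDiffAt ℝ 2 q u := hq.contDiffAt (hU.mem_nhds hu)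
  have hcof : ∀ i, (fun v => cofactor (jacobian q v) i j) =ᶠ[nhds u]
      fun v => (jacobian q v).adjugate i j := fun i => by
    filter_upwards [hU.mem_nhds hu] with v hv
    rw [cofactor_eq_adjugate_s13 (hinv v hv)]
  have hdiff : ∀ m k, DifferentiableAt ℝ (fun v => jacobian q v m k) u := fun m k =>
    (hqu.hasFDerivAt_fderiv_apply_apply _ m).differentiableAt
  let B : Fin p → Matrix (Fin p) (Fin p) ℝ := fun i =>
    of fun m k => fderiv ℝ (fun v => jacobian q v m k) u (Pi.single i 1)
  calc ∑ i, fderiv ℝ (fun v => cofactor (jacobian q v) i j) u (Pi.single i 1)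
      = ∑ i, ∑ l ∈ univ.erase i, adjugateDerivTerm (jacobian q u) (B i) j i l :=
        sum_congr rfl fun i _ => by rw [(hcof i).fderiv_eq, fderiv_adjugate_apply hdiff]
    _ = 0 := sum_sum_erase_eq_zero_of_antisymm fun i l =>
        adjugateDerivTerm_add_swap _ (fun i l m => hqu.fderiv_fderiv_apply_apply_comm _ _ m) j
end

section
/- Let (B, ‖·‖) be a normed space, φ : A₀ → B a map on a subset A₀ of a normed space A, a* ∈ A₀ with derivative map φ' on the normalized tangent set T¹ satisfying the uniform directional differentiability condition. If a ∈ A₀, a ≠ a*, ‖a − a*‖ < ε (ε from the differentiability condition with tolerance η/|Z|), and ‖φ'((a − a*)/‖a − a*‖)‖ ≥ η, then ‖φ(a) − φ(a*)‖ ≥ ‖a − a*‖ (η − η/|Z|) > 0 for |Z| ≥ 2; in particular φ(a) ≠ φ(a*). -/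
theorem mul_sub_lt_norm_of_norm_inv_smul_sub_lt {B : Type*} [SeminormedAddCommGroup B]
    [NormedSpace ℝ B] {t η δ : ℝ} {x v : B} (ht : 0 < t) (hv : η ≤ ‖v‖)
    (hx : ‖t⁻¹ • x - v‖ < δ) : t * (η - δ) < ‖x‖ := by
  have hquot : η - δ < t⁻¹ * ‖x‖ := by
    have hrev := norm_sub_norm_le v (t⁻¹ • x)
    rw [norm_sub_rev, norm_smul, Real.norm_of_nonneg (inv_nonneg.2 ht.le)] at hrev
    linarith
  exact (lt_inv_mul_iff₀ ht).1 hquot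

theorem stmt17_general {A B : Type*} [NormedAddCommGroup A] [NormedSpace ℝ A]
    [NormedAddCommGroup B] [NormedSpace ℝ B]
    (A₀ : Set A) (astar : A)
    (φ : A → B) (Dφ : A → B)
    (η : ℝ) (hη : 0 < η) (n : ℕ) (hn : 2 ≤ n)
    (ε : ℝ)
    (hdiff : ∀ h : A, (∃ a ∈ A₀, a ≠ astar ∧ h = ‖a - astar‖⁻¹ • (a - astar)) →
      ∀ t : ℝ, 0 < t → t < ε → astar + t • h ∈ A₀ →
        ‖t⁻¹ • (φ (astar + t • h) - φ astar) - Dφ h‖ < η / n)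
    (a : A) (ha : a ∈ A₀) (hane : a ≠ astar) (hlt : ‖a - astar‖ < ε)
    (hD : η ≤ ‖Dφ (‖a - astar‖⁻¹ • (a - astar))‖) :
    ‖a - astar‖ * (η - η / n) ≤ ‖φ a - φ astar‖ ∧ φ a ≠ φ astar := by
  have hpos : 0 < ‖a - astar‖ := norm_pos_iff.2 (sub_ne_zero.2 hane)
  have hstep : astar + ‖a - astar‖ • (‖a - astar‖⁻¹ • (a - astar)) = a := by
    rw [smul_inv_smul₀ hpos.ne', add_sub_cancel]
  have hquot := hdiff _ ⟨a, ha, hane, rfl⟩ _ hpos hlt (by rwa [hstep])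
  rw [hstep] at hquot
  have hlow := mul_sub_lt_norm_of_norm_inv_smul_sub_lt hpos hD hquot
  have hgap : 0 ≤ η - η / n :=
    sub_nonneg.2 (div_le_self hη.le (by exact_mod_cast one_le_two.trans hn))
  refine ⟨hlow.le, fun heq => ?_⟩
  rw [heq, sub_self, norm_zero] at hlow
  exact (mul_nonneg hpos.le hgap).not_gt hlow

theorem stmt17 {A B : Type*} [NormedAddCommGroup A] [NormedSpace ℝ A]
    [NormedAddCommGroup B] [NormedSpace ℝ B]
    (A₀ : Set A) (astar : A) (hastar : astar ∈ A₀)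
    (φ : A → B) (Dφ : A → B)
    (η : ℝ) (hη : 0 < η) (n : ℕ) (hn : 2 ≤ n)
    (ε : ℝ) (hε : 0 < ε)
    (hdiff : ∀ h : A, (∃ a ∈ A₀, a ≠ astar ∧ h = ‖a - astar‖⁻¹ • (a - astar)) →
      ∀ t : ℝ, 0 < t → t < ε → astar + t • h ∈ A₀ →
        ‖t⁻¹ • (φ (astar + t • h) - φ astar) - Dφ h‖ < η / n)
    (a : A) (ha : a ∈ A₀) (hane : a ≠ astar) (hlt : ‖a - astar‖ < ε)
    (hD : η ≤ ‖Dφ (‖a - astar‖⁻¹ • (a - astar))‖) :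
    ‖a - astar‖ * (η - η / n) ≤ ‖φ a - φ astar‖ ∧ φ a ≠ φ astar :=
  stmt17_general A₀ astar φ Dφ η hη n hn ε hdiff a ha hane hlt hD
end
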